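/- Let d ≥ 3 and let |ψ⟩ = |φ¹⟩⊗|φ²³⟩ be a pure state on ℂ^d ⊗ (ℂ^d⊗ℂ^d) separable across the bipartition 1|23. With Bloch expansions |φ¹⟩⟨φ¹| = (1/d)I + (1/2)Σ t_{i}^{1} λ_i and |φ²³⟩⟨φ²³| = (1/d²)I⊗I + (1/(2d))(Σ t_i^{2} λ_i⊗I + Σ t_i^{3} I⊗λ_i) + (1/4)Σ t_{ij}^{23} λ_i⊗λ_j, define the matrix N = u vᵗ where u = (1, T^{(1̃)})ᵗ is the column vector formed by 1 and the components t_i^{1} for i = d(d+1)/2, …, d²−1, and v = (1, (1/2)T^{(2)}, (1/2)T^{(3)}, (1/2)T^{(23)})ᵗ. Then ‖N‖_tr ≤ √((3d³ + 4d² − 7d + 2)/(2d)). -/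

import Mathlib

/-!
`N = u vᵗ` has rank one, so `‖N‖_tr = ‖u‖ ‖v‖`. After normalisation the identity and the `λ_i`
form an orthonormal family for the Hilbert–Schmidt product, and so do their Kronecker products on
`ℂ^d ⊗ ℂ^d`; the Bloch coefficients of a pure state `ρ` are its coordinates in these families.
Bessel's inequality together with purity, `tr ρ² = 1`, gives `1/d + ‖T¹‖²/2 ≤ 1` and
`1/d² + (‖T²‖² + ‖T³‖²)/(2d) + ‖T²³‖²/4 ≤ 1`, hence `‖u‖² ≤ 3 − 2/d` and, as `d ≥ 2`,
`‖v‖² ≤ 1 + (d − 1/d)/2`.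
-/

open Matrix
open scoped ComplexOrder Kronecker

noncomputable def traceNorm {𝕜 : Type*} [RCLike 𝕜] {m n : Type*} [Fintype m] [Fintype n]
    [DecidableEq n] (B : Matrix m n 𝕜) : ℝ :=
  RCLike.re ((Matrix.posSemidef_conjTranspose_mul_self B).1.eigenvectorUnitary.1 *
    Matrix.diagonal (((↑) : ℝ → 𝕜) ∘ Real.sqrt ∘ (Matrix.posSemidef_conjTranspose_mul_self B).1.eigenvalues) *
    (star (Matrix.posSemidef_conjTranspose_mul_self B).1.eigenvectorUnitary : Matrix n n 𝕜)).trace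

theorem traceNorm_eq_re_trace_of_sq_eq {𝕜 m n : Type*} [RCLike 𝕜] [Fintype m] [Fintype n]
    [DecidableEq n] {B : Matrix m n 𝕜} {X : Matrix n n 𝕜} (hX : X.PosSemidef)
    (h : X ^ 2 = Bᴴ * B) : traceNorm B = RCLike.re X.trace := by
  open scoped MatrixOrder in
  have hB := posSemidef_conjTranspose_mul_self B
  have hsqrt : cfc Real.sqrt (Bᴴ * B) = X := by
    rw [← cfcₙ_eq_cfc (hf0 := Real.sqrt_zero), ← CFC.sqrt_eq_real_sqrt _ hB.nonneg]
    exact CFC.sqrt_unique (by rw [← h, sq]) hX.nonneg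
  rw [hB.1.cfc_eq] at hsqrt
  exact congrArg (fun M => RCLike.re M.trace) hsqrt

theorem traceNorm_vecMulVec {m n : Type*} [Fintype m] [Fintype n] [DecidableEq n]
    (u : m → ℝ) (v : n → ℝ) :
    traceNorm (vecMulVec u v) = √(∑ i, u i ^ 2) * √(∑ j, v j ^ 2) := by
  rw [show ∑ i, u i ^ 2 = u ⬝ᵥ u by simp [dotProduct, sq],
    show ∑ j, v j ^ 2 = v ⬝ᵥ v by simp [dotProduct, sq]]
  rcases eq_or_ne v 0 with rfl | hv
  · rw [traceNorm_eq_re_trace_of_sq_eq PosSemidef.zero (by simp)]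
    simp
  have hvv : 0 < v ⬝ᵥ v := by simpa using dotProduct_star_self_pos_iff.2 hv
  set c := √(u ⬝ᵥ u) / √(v ⬝ᵥ v)
  have hX : (c • vecMulVec v v).PosSemidef := by
    simpa using (posSemidef_vecMulVec_self_star v).smul (by positivity : 0 ≤ c)
  rw [traceNorm_eq_re_trace_of_sq_eq hX]
  · simp only [trace_smul, trace_vecMulVec, RCLike.re_to_real, smul_eq_mul, c]
    rw [div_mul_eq_mul_div, mul_div_assoc, Real.div_sqrt]
  · have hc : c ^ 2 * (v ⬝ᵥ v) = u ⬝ᵥ u := by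
      rw [div_pow, Real.sq_sqrt (by simpa using dotProduct_self_star_nonneg u), Real.sq_sqrt hvv.le]
      field_simp
    rw [sq, smul_mul_smul, vecMulVec_mul_vecMulVec, conjTranspose_vecMulVec,
      vecMulVec_mul_vecMulVec]
    simp only [star_trivial, vecMulVec_smul, smul_smul, ← sq, hc]

theorem inv_sqrt_smul_inv_sqrt_smul_self {𝕜 : Type*} [RCLike 𝕜] {x : ℝ} (hx : 0 < x) :
    (√x)⁻¹ • (√x)⁻¹ • (x : 𝕜) = 1 := by
  rw [smul_smul, ← mul_inv, Real.mul_self_sqrt hx.le, RCLike.real_smul_eq_coe_mul,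
    ← RCLike.ofReal_mul, inv_mul_cancel₀ hx.ne', RCLike.ofReal_one]

namespace Matrix

variable {𝕜 ι κ n p : Type*} [RCLike 𝕜] [Fintype n] [Fintype p]

/-- Orthonormality for the Hilbert–Schmidt inner product `⟪A, B⟫ = tr (B Aᴴ)`. -/
def HSOrthonormal [DecidableEq ι] (B : ι → Matrix n n 𝕜) : Prop :=
  ∀ i j, (B j * (B i)ᴴ).trace = if i = j then 1 else 0

theorem HSOrthonormal.sum_norm_trace_mul_conjTranspose_sq_le [Fintype ι] [DecidableEq ι]
    [DecidableEq n] {B : ι → Matrix n n 𝕜} (hB : HSOrthonormal B) (ρ : Matrix n n 𝕜) :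
    ∑ i, ‖(ρ * (B i)ᴴ).trace‖ ^ 2 ≤ RCLike.re (ρ * ρᴴ).trace := by
  let _ := (1 : Matrix n n 𝕜).toMatrixSeminormedAddCommGroup PosSemidef.one
  let _ := (1 : Matrix n n 𝕜).toMatrixInnerProductSpace PosSemidef.one
  have hinner : ∀ x y : Matrix n n 𝕜, inner 𝕜 x y = (y * xᴴ).trace := fun x y => by
    change (y * 1 * xᴴ).trace = _
    rw [Matrix.mul_one]
  have hon : Orthonormal 𝕜 B := orthonormal_iff_ite.2 fun i j => by rw [hinner, hB]
  simpa only [hinner, @norm_sq_eq_re_inner 𝕜] using hon.sum_inner_products_le ρ (s := .univ)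

theorem HSOrthonormal.kronecker [DecidableEq ι] [DecidableEq κ] {A : ι → Matrix n n 𝕜}
    {B : κ → Matrix p p 𝕜} (hA : HSOrthonormal A) (hB : HSOrthonormal B) :
    HSOrthonormal fun x : ι × κ => A x.1 ⊗ₖ B x.2 := by
  rintro ⟨i, k⟩ ⟨j, l⟩
  rw [conjTranspose_kronecker, ← mul_kronecker_mul, trace_kronecker, hA, hB]
  by_cases hij : i = j <;> by_cases hkl : k = l <;> simp [hij, hkl]

theorem trace_vecMulVec_star_self {φ : n → 𝕜} (hφ : ∑ i, ‖φ i‖ ^ 2 = 1) :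
    (vecMulVec φ (star φ)).trace = 1 := by
  simp only [trace_vecMulVec, dotProduct, Pi.star_apply, RCLike.star_def, RCLike.mul_conj]
  exact_mod_cast congrArg ((↑) : ℝ → 𝕜) hφ

theorem re_trace_vecMulVec_star_self_mul_conjTranspose {φ : n → 𝕜}
    (hφ : ∑ i, ‖φ i‖ ^ 2 = 1) :
    RCLike.re (vecMulVec φ (star φ) * (vecMulVec φ (star φ))ᴴ).trace = 1 := by
  have hdot : star φ ⬝ᵥ φ = 1 := by
    rw [dotProduct_comm, ← trace_vecMulVec, trace_vecMulVec_star_self hφ]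
  rw [conjTranspose_vecMulVec, star_star, vecMulVec_mul_vecMulVec, hdot, one_smul,
    trace_vecMulVec_star_self hφ, RCLike.one_re]

theorem HSOrthonormal.sum_norm_trace_vecMulVec_star_mul_sq_le_one [Fintype ι] [DecidableEq ι]
    [DecidableEq n] {B : ι → Matrix n n 𝕜} (hB : HSOrthonormal B) {φ : n → 𝕜}
    (hφ : ∑ i, ‖φ i‖ ^ 2 = 1) :
    ∑ i, ‖(vecMulVec φ (star φ) * (B i)ᴴ).trace‖ ^ 2 ≤ 1 :=
  re_trace_vecMulVec_star_self_mul_conjTranspose hφ ▸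
    hB.sum_norm_trace_mul_conjTranspose_sq_le _

theorem norm_trace_mul_conjTranspose_smul_sq (ρ M : Matrix n n 𝕜) (r : ℝ) :
    ‖(ρ * (r • M)ᴴ).trace‖ ^ 2 = r ^ 2 * ‖(ρ * Mᴴ).trace‖ ^ 2 := by
  simp [conjTranspose_smul, trace_smul, norm_smul, mul_pow]

theorem norm_trace_mul_conjTranspose_smul_kronecker_smul_sq (ρ : Matrix (n × p) (n × p) 𝕜)
    (r s : ℝ) (A : Matrix n n 𝕜) (B : Matrix p p 𝕜) :
    ‖(ρ * ((r • A) ⊗ₖ (s • B))ᴴ).trace‖ ^ 2 =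
      r ^ 2 * s ^ 2 * ‖(ρ * (A ⊗ₖ B)ᴴ).trace‖ ^ 2 := by
  rw [smul_kronecker, kronecker_smul, norm_trace_mul_conjTranspose_smul_sq,
    norm_trace_mul_conjTranspose_smul_sq, mul_assoc]

variable [DecidableEq n]

noncomputable def blochFrame (lam : ι → Matrix n n 𝕜) : Unit ⊕ ι → Matrix n n 𝕜 :=
  Sum.elim (fun _ => (√(Fintype.card n : ℝ))⁻¹ • 1) fun i => (√2)⁻¹ • lam i

variable {lam : ι → Matrix n n 𝕜}

theorem hsOrthonormal_blochFrame [Nonempty n] [DecidableEq ι] (hherm : ∀ i, (lam i).IsHermitian)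
    (htraceless : ∀ i, (lam i).trace = 0)
    (horth : ∀ i j, (lam i * lam j).trace = if i = j then 2 else 0) :
    HSOrthonormal (blochFrame lam) := by
  rintro (⟨⟩ | i) (⟨⟩ | j)
  · simpa [blochFrame, trace_smul] using
      inv_sqrt_smul_inv_sqrt_smul_self (𝕜 := 𝕜) (x := Fintype.card n) (by positivity)
  · simp [blochFrame, trace_smul, htraceless]
  · simp [blochFrame, conjTranspose_smul, trace_smul, htraceless, (hherm i).eq]
  · obtain rfl | hij := eq_or_ne i j
    · simpa [blochFrame, conjTranspose_smul, trace_smul, (hherm i).eq, horth,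
        RCLike.ofReal_ofNat] using inv_sqrt_smul_inv_sqrt_smul_self (𝕜 := 𝕜) (x := 2) two_pos
    · simp [blochFrame, conjTranspose_smul, trace_smul, (hherm i).eq, horth, hij, hij.symm]

theorem blochFrame_sum_sq_le_one [Fintype ι] [DecidableEq ι]
    (hF : HSOrthonormal (blochFrame lam)) (hherm : ∀ i, (lam i).IsHermitian) {φ : n → 𝕜}
    (hφ : ∑ i, ‖φ i‖ ^ 2 = 1) {t : ι → ℝ}
    (ht : ∀ i, (t i : 𝕜) = (vecMulVec φ (star φ) * lam i).trace) :
    (Fintype.card n : ℝ)⁻¹ + (∑ i, t i ^ 2) / 2 ≤ 1 := by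
  have h := hF.sum_norm_trace_vecMulVec_star_mul_sq_le_one hφ
  simp only [Fintype.sum_sum_type, blochFrame, Sum.elim_inl, Sum.elim_inr,
    norm_trace_mul_conjTranspose_smul_sq, conjTranspose_one, Matrix.mul_one,
    trace_vecMulVec_star_self hφ, (hherm _).eq, ← ht, RCLike.norm_ofReal, sq_abs, inv_pow,
    Real.sq_sqrt (Nat.cast_nonneg _), Real.sq_sqrt zero_le_two] at h
  simpa [← Finset.mul_sum, div_eq_inv_mul] using h

theorem blochFrame_kronecker_sum_sq_le_one [Fintype ι] [DecidableEq ι] [Fintype κ]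
    [DecidableEq κ] [DecidableEq p] {lam' : κ → Matrix p p 𝕜} (hF : HSOrthonormal (blochFrame lam))
    (hF' : HSOrthonormal (blochFrame lam')) (hherm : ∀ i, (lam i).IsHermitian)
    (hherm' : ∀ j, (lam' j).IsHermitian) {φ : n × p → 𝕜} (hφ : ∑ x, ‖φ x‖ ^ 2 = 1)
    {s : ι → ℝ} {t : κ → ℝ} {c : ι → κ → ℝ}
    (hs : ∀ i, (s i : 𝕜) = (vecMulVec φ (star φ) * (lam i ⊗ₖ (1 : Matrix p p 𝕜))).trace)
    (ht : ∀ j, (t j : 𝕜) =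
      (vecMulVec φ (star φ) * ((1 : Matrix n n 𝕜) ⊗ₖ lam' j)).trace)
    (hc : ∀ i j, (c i j : 𝕜) = (vecMulVec φ (star φ) * (lam i ⊗ₖ lam' j)).trace) :
    (Fintype.card n * Fintype.card p : ℝ)⁻¹ + (∑ i, s i ^ 2) / (2 * Fintype.card p)
      + (∑ j, t j ^ 2) / (2 * Fintype.card n) + (∑ i, ∑ j, c i j ^ 2) / 4 ≤ 1 := by
  have h := (hF.kronecker hF').sum_norm_trace_vecMulVec_star_mul_sq_le_one hφ
  simp only [Fintype.sum_prod_type, Fintype.sum_sum_type, blochFrame, Sum.elim_inl, Sum.elim_inr,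
    norm_trace_mul_conjTranspose_smul_kronecker_smul_sq] at h
  simp only [conjTranspose_kronecker, conjTranspose_one, (hherm _).eq, (hherm' _).eq,
    one_kronecker_one, trace_vecMulVec_star_self hφ, ← hs, ← ht, ← hc, RCLike.norm_ofReal,
    sq_abs, inv_pow, Real.sq_sqrt (Nat.cast_nonneg _), Real.sq_sqrt zero_le_two,
    Finset.univ_unique, Finset.sum_singleton, norm_one, one_pow, mul_one, Finset.sum_add_distrib,
    ← Finset.mul_sum] at h
  convert h using 1
  ring

end Matrix

theorem sum_sq_sumElim_one_subtype_le {ι : Type*} [Fintype ι] (P : ι → Prop) [DecidablePred P]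
    (t : ι → ℝ) :
    ∑ x, Sum.elim (fun _ : Unit => (1 : ℝ)) (fun i : {i // P i} => t i.1) x ^ 2 ≤
      1 + ∑ i, t i ^ 2 := by
  rw [Fintype.sum_sum_type, ← Fintype.sum_subtype_add_sum_subtype P]
  simpa using Finset.sum_nonneg fun i _ => sq_nonneg (t i.1)

theorem add_add_le_two_mul_sub_two_div {d y z w : ℝ} (hd : 2 ≤ d) (hw : 0 ≤ w)
    (h : (d * d)⁻¹ + y / (2 * d) + z / (2 * d) + w / 4 ≤ 1) : y + z + w ≤ 2 * d - 2 / d := by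
  have hd0 : 0 < d := by linarith
  have e : 2 * d * ((d * d)⁻¹ + y / (2 * d) + z / (2 * d) + w / 4) =
      2 / d + y + z + d * w / 2 := by
    field_simp
    ring
  have h' := mul_le_mul_of_nonneg_left h (by positivity : 0 ≤ 2 * d)
  rw [e, mul_one] at h'
  nlinarith [mul_nonneg hw (sub_nonneg.2 hd)]

/-- Lemma 2(a) of the paper: for a pure state on `ℂ^d ⊗ (ℂ^d⊗ℂ^d)` separable across
`1|23`, the matrix `N_{1|23} = u vᵗ` built from the Bloch/correlation tensors satisfies
`‖N‖_tr ≤ √((3d³+4d²−7d+2)/(2d))`. -/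
theorem traceNorm_N_1_23_le {d : ℕ} (hd : 3 ≤ d)
    (φ1 : Fin d → ℂ) (φ23 : Fin d × Fin d → ℂ)
    (hφ1 : ∑ i, ‖φ1 i‖ ^ 2 = 1) (hφ23 : ∑ v, ‖φ23 v‖ ^ 2 = 1)
    (lam : Fin (d ^ 2 - 1) → Matrix (Fin d) (Fin d) ℂ)
    (hherm : ∀ i, (lam i).IsHermitian)
    (htraceless : ∀ i, (lam i).trace = 0)
    (horth : ∀ i j, (lam i * lam j).trace = if i = j then 2 else 0)
    (t1 t2 t3 : Fin (d ^ 2 - 1) → ℝ) (t23 : Fin (d ^ 2 - 1) → Fin (d ^ 2 - 1) → ℝ)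
    (ht1 : ∀ i, (t1 i : ℂ) = (Matrix.vecMulVec φ1 (star φ1) * lam i).trace)
    (ht2 : ∀ i, (t2 i : ℂ) =
      (Matrix.vecMulVec φ23 (star φ23) * (lam i ⊗ₖ (1 : Matrix (Fin d) (Fin d) ℂ))).trace)
    (ht3 : ∀ i, (t3 i : ℂ) =
      (Matrix.vecMulVec φ23 (star φ23) * ((1 : Matrix (Fin d) (Fin d) ℂ) ⊗ₖ lam i)).trace)
    (ht23 : ∀ i j, (t23 i j : ℂ) =
      (Matrix.vecMulVec φ23 (star φ23) * (lam i ⊗ₖ lam j)).trace)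
    -- the augmented vectors `u = (1, T^{(1̃)})` and `v = (1, ½T^{(2)}, ½T^{(3)}, ½T^{(23)})`
    (u : Unit ⊕ {i : Fin (d ^ 2 - 1) // d * (d + 1) / 2 ≤ (i : ℕ) + 1} → ℝ)
    (hu : u = Sum.elim (fun _ => 1) (fun i => t1 i.1))
    (v : Unit ⊕ (Fin (d ^ 2 - 1) ⊕ Fin (d ^ 2 - 1) ⊕ Fin (d ^ 2 - 1) × Fin (d ^ 2 - 1)) → ℝ)
    (hv : v = Sum.elim (fun _ => 1)
      (Sum.elim (fun i => t2 i / 2) (Sum.elim (fun i => t3 i / 2) (fun p => t23 p.1 p.2 / 2))))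
    (N : Matrix (Unit ⊕ {i : Fin (d ^ 2 - 1) // d * (d + 1) / 2 ≤ (i : ℕ) + 1})
      (Unit ⊕ (Fin (d ^ 2 - 1) ⊕ Fin (d ^ 2 - 1) ⊕ Fin (d ^ 2 - 1) × Fin (d ^ 2 - 1))) ℝ)
    (hN : N = Matrix.vecMulVec u v) :
    traceNorm N ≤ Real.sqrt ((3 * (d : ℝ) ^ 3 + 4 * d ^ 2 - 7 * d + 2) / (2 * d)) := by
  have : Nonempty (Fin d) := ⟨⟨0, by omega⟩⟩
  have hD : (3 : ℝ) ≤ d := by exact_mod_cast hd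
  have hF := hsOrthonormal_blochFrame hherm htraceless horth
  have h1 := blochFrame_sum_sq_le_one hF hherm hφ1 ht1
  have h23 := blochFrame_kronecker_sum_sq_le_one hF hF hherm hherm hφ23 ht2 ht3 ht23
  simp only [Fintype.card_fin] at h1 h23
  have hu2 : ∑ x, u x ^ 2 ≤ 3 - 2 / d := by
    subst hu
    refine (sum_sq_sumElim_one_subtype_le _ t1).trans ?_
    linarith [div_eq_mul_inv (2 : ℝ) d]
  have hv2 : ∑ x, v x ^ 2 ≤ 1 + (2 * d - 2 / d) / 4 := by
    subst hv
    simp only [Fintype.sum_sum_type, Fintype.sum_prod_type, Sum.elim_inl, Sum.elim_inr, div_pow]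
    simp only [Finset.univ_unique, Finset.sum_singleton, one_pow, ← Finset.sum_div]
    linarith [add_add_le_two_mul_sub_two_div (by linarith) (by positivity) h23]
  rw [hN, traceNorm_vecMulVec, ← Real.sqrt_mul (by positivity)]
  gcongr
  -- `3d³ + 4d² − 7d + 2 = (3d − 2)(d² + 2d − 1)`: the two bounds multiply to the claim over `d`
  calc (∑ x, u x ^ 2) * ∑ x, v x ^ 2 ≤ (3 - 2 / d) * (1 + (2 * d - 2 / d) / 4) :=
        mul_le_mul hu2 hv2 (by positivity) ((Finset.sum_nonneg fun _ _ => sq_nonneg _).trans hu2)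
    _ = (3 * d ^ 3 + 4 * d ^ 2 - 7 * d + 2) / (2 * d) / d := by
        field_simp
        ring
    _ ≤ (3 * d ^ 3 + 4 * d ^ 2 - 7 * d + 2) / (2 * d) :=
        div_le_self (div_nonneg (by nlinarith) (by positivity)) (by linarith)
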